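/- Growth bounds for the auxiliary functions in the maximum principle (Lemma B.1): Let H:ℝ^{2n}→ℝ be smooth with ‖Hess_xH‖≤M, ‖∇H(x)‖≤h₁+M‖x‖ and ‖D³H_x‖·‖x‖≤L for all x∈ℝ^{2n}. Then there exist constants α₁,α₂,α₃,α₄>0, depending only on M, h₁ and L, such that for all x∈ℝ^{2n}: |f₁(x)| ≤ α₁(‖x‖+1)², |f₂(x)| ≤ α₂(‖x‖+1)², ‖∇f₁(x)‖ ≤ α₃(‖x‖+1), and ‖∇f₂(x)‖ ≤ α₄(‖x‖+1). -/

import Mathlib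

open MeasureTheory intervalIntegral Set
open scoped RealInnerProductSpace Topology

noncomputable section

/-- Phase space `ℝ^{2n}`, realized as `ℂ^n` with its real inner product. -/
abbrev E (n : ℕ) := EuclideanSpace ℂ (Fin n)

/-- The standard linear complex structure `J₀` (multiplication by `i`). -/
def J0 {n : ℕ} (x : E n) : E n := Complex.I • x

/-- The standard symplectic form `ω₀(u,w) = ⟨J₀u, w⟩`. -/
def om {n : ℕ} (u w : E n) : ℝ := @inner ℝ _ _ (J0 u) w

/-- The Hamiltonian vector field `X^H = J₀ ∇H`. -/
def XH {n : ℕ} (H : E n → ℝ) (x : E n) : E n := J0 (gradient H x)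

/-- A loop: a smooth 1-periodic map `ℝ → ℝ^{2n}`. -/
def IsLoop {n : ℕ} (v : ℝ → E n) : Prop := ContDiff ℝ (⊤ : ℕ∞) v ∧ ∀ t, v (t + 1) = v t

/-- The `L²` norm on loops. -/
def L2 {n : ℕ} (v : ℝ → E n) : ℝ := Real.sqrt (∫ t in (0:ℝ)..1, ‖v t‖ ^ 2)

/-- The Rabinowitz action functional. -/
def RabAction {n : ℕ} (H : E n → ℝ) (v : ℝ → E n) (η : ℝ) : ℝ :=
  (∫ t in (0:ℝ)..1, (1 / 2) * om (v t) (deriv v t)) - η * ∫ t in (0:ℝ)..1, H (v t)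

/-- The norm `‖∇𝒜^H(v,η)‖ = ‖∂_t v − η X^H(v)‖_{L²} + |∫₀¹ H(v)|` of the `L²` gradient. -/
def gradNorm {n : ℕ} (H : E n → ℝ) (v : ℝ → E n) (η : ℝ) : ℝ :=
  L2 (fun t => deriv v t - η • XH H (v t)) + |∫ t in (0:ℝ)..1, H (v t)|

/-- A Liouville vector field on a set `U`. -/
def IsLiouvilleOn {n : ℕ} (X : E n → E n) (U : Set (E n)) : Prop :=
  ∀ x ∈ U, ∀ u w : E n, om (fderiv ℝ X x u) w + om u (fderiv ℝ X x w) = om u w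

/-- Condition (H1). -/
def SatH1 {n : ℕ} (H : E n → ℝ) (c₁ c₂ c₃ : ℝ) : Prop :=
  ∃ X : E n → E n, ContDiff ℝ (⊤ : ℕ∞) X ∧ IsLiouvilleOn X Set.univ ∧
    (∀ x, ‖X x‖ ≤ c₁ * (‖x‖ + 1)) ∧ ∀ x, fderiv ℝ H x (X x) ≥ c₂ * ‖x‖ ^ 2 - c₃

/-- Condition (H2). -/
def SatH2 {n : ℕ} (H : E n → ℝ) (L : ℝ) : Prop :=
  ∀ x, ‖iteratedFDeriv ℝ 3 H x‖ * ‖x‖ ≤ L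

/-- Condition (H3). -/
def SatH3 {n : ℕ} (H : E n → ℝ) (c₄ c₅ ν : ℝ) : Prop :=
  ∃ X : E n → E n, IsLiouvilleOn X (H ⁻¹' Ioo (-ν) ν) ∧
    (∀ x ∈ H ⁻¹' Ioo (-ν) ν, ‖X x‖ ≤ c₄ * (‖x‖ ^ 2 + 1)) ∧
    ∀ x ∈ H ⁻¹' Ioo (-ν) ν, fderiv ℝ H x (X x) ≥ c₅

/-- Admissible Hamiltonians. -/
def Admissible {n : ℕ} (H : E n → ℝ) : Prop :=
  ContDiff ℝ (⊤ : ℕ∞) H ∧ ∃ c₁ c₂ c₃ L c₄ c₅ ν : ℝ,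
    0 < c₁ ∧ 0 < c₂ ∧ 0 ≤ c₃ ∧ 0 ≤ L ∧ 0 < c₄ ∧ 0 < c₅ ∧ 0 < ν ∧
    SatH1 H c₁ c₂ c₃ ∧ SatH2 H L ∧ SatH3 H c₄ c₅ ν

/-- Uniform bound on the Hessian. -/
def HessBound {n : ℕ} (H : E n → ℝ) (M : ℝ) : Prop :=
  ∀ x, ‖iteratedFDeriv ℝ 2 H x‖ ≤ M

/-- Linear growth of the gradient. -/
def GradBound {n : ℕ} (H : E n → ℝ) (M h₁ : ℝ) : Prop :=
  ∀ x, ‖gradient H x‖ ≤ h₁ + M * ‖x‖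


/-- `dF(X^H)` for the radial function `F(x) = ¼‖x‖²` (so `∇F(x) = x/2`). -/
def afun {n : ℕ} (H : E n → ℝ) (x : E n) : ℝ :=
  @inner ℝ _ _ ((1 / 2 : ℝ) • x) (J0 (gradient H x))

/-- `f₂ = d^ℂF(X^H) = −⟨∇F, ∇H⟩` for the radial function `F(x) = ¼‖x‖²`. -/
def f2fun {n : ℕ} (H : E n → ℝ) (x : E n) : ℝ :=
  -(@inner ℝ _ _ ((1 / 2 : ℝ) • x) (gradient H x))

/-- `f₁ = ⟨∇a, J₀∇H⟩ − ‖∇H‖² − ‖∇f₂‖² − ‖∇a‖²` where `a = dF(X^H)`. -/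
def f1fun {n : ℕ} (H : E n → ℝ) (x : E n) : ℝ :=
  @inner ℝ _ _ (gradient (afun H) x) (J0 (gradient H x))
    - ‖gradient H x‖ ^ 2 - ‖gradient (f2fun H) x‖ ^ 2 - ‖gradient (afun H) x‖ ^ 2

-- ===== auxiliary general lemmas =====
section norms
variable {F G : Type*} [NormedAddCommGroup F] [NormedSpace ℝ F] [NormedAddCommGroup G] [NormedSpace ℝ G]

theorem norm_itfd_one (f : F → G) (x : F) : ‖iteratedFDeriv ℝ 1 f x‖ = ‖fderiv ℝ f x‖ := by
  rw [iteratedFDeriv_succ_eq_comp_left, Function.comp_apply, LinearIsometryEquiv.norm_map,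
    iteratedFDeriv_zero_eq_comp, LinearIsometryEquiv.comp_fderiv]
  refine ContinuousLinearMap.opNorm_ext _ _ fun v => ?_
  show ‖(continuousMultilinearCurryFin0 ℝ F G).symm (fderiv ℝ f x v)‖ = _
  rw [LinearIsometryEquiv.norm_map]

theorem norm_fd2 (f : F → G) (x : F) : ‖fderiv ℝ (fderiv ℝ f) x‖ = ‖iteratedFDeriv ℝ 2 f x‖ := by
  rw [← norm_iteratedFDeriv_fderiv, norm_itfd_one]

theorem norm_fd3 (f : F → G) (x : F) (v u : F) :
    ‖fderiv ℝ (fderiv ℝ (fderiv ℝ f)) x v u‖ ≤ ‖iteratedFDeriv ℝ 3 f x‖ * ‖v‖ * ‖u‖ := by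
  have h := (iteratedFDeriv ℝ 2 (fderiv ℝ f) x).le_opNorm ![v, u]
  rw [iteratedFDeriv_two_apply, norm_iteratedFDeriv_fderiv] at h
  simpa [Fin.prod_univ_two, mul_assoc] using h
end norms

-- ===== structures on E n =====
namespace Aux
variable {n : ℕ}

/-- multiplication by I as a real CLM -/
def JL (n : ℕ) : E n →L[ℝ] E n :=
  ((Complex.I : ℂ) • (ContinuousLinearMap.id ℂ (E n))).restrictScalars ℝ

@[simp] lemma JL_apply (x : E n) : JL n x = Complex.I • x := rfl

@[simp] lemma norm_JL (x : E n) : ‖JL n x‖ = ‖x‖ := by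
  show ‖Complex.I • x‖ = ‖x‖
  rw [norm_smul, Complex.norm_I, one_mul]

lemma inner_JL_left (u w : E n) : ⟪JL n u, w⟫ = - ⟪u, JL n w⟫ := by
  show ⟪Complex.I • u, w⟫ = - ⟪u, Complex.I • w⟫
  simp only [PiLp.inner_apply, PiLp.smul_apply]
  rw [← Finset.sum_neg_distrib]
  congr 1; ext i
  rw [Complex.inner, Complex.inner]
  simp [Complex.mul_re]
  ring

/-- the inverse dual isometry as a CLM -/
def dCLM (n : ℕ) : StrongDual ℝ (E n) →L[ℝ] E n :=
  (InnerProductSpace.toDual ℝ (E n)).symm.toContinuousLinearEquiv.toContinuousLinearMap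

@[simp] lemma dCLM_apply (φ : StrongDual ℝ (E n)) :
    dCLM n φ = (InnerProductSpace.toDual ℝ (E n)).symm φ := rfl

@[simp] lemma norm_dCLM_apply (φ : StrongDual ℝ (E n)) : ‖dCLM n φ‖ = ‖φ‖ :=
  LinearIsometryEquiv.norm_map _ _

lemma inner_dCLM (φ : StrongDual ℝ (E n)) (w : E n) : ⟪dCLM n φ, w⟫ = φ w :=
  InnerProductSpace.toDual_symm_apply

variable (H : E n → ℝ)

/-- Hessian operator -/
def Hop (x : E n) : E n →L[ℝ] E n := (dCLM n).comp (fderiv ℝ (fderiv ℝ H) x)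

lemma inner_Hop (x v w : E n) : ⟪Hop H x v, w⟫ = fderiv ℝ (fderiv ℝ H) x v w :=
  inner_dCLM _ _

lemma norm_Hop_le (x : E n) : ‖Hop H x‖ ≤ ‖iteratedFDeriv ℝ 2 H x‖ := by
  rw [← norm_fd2]
  refine ContinuousLinearMap.opNorm_le_bound _ (ContinuousLinearMap.opNorm_nonneg _) fun v => ?_
  show ‖dCLM n (fderiv ℝ (fderiv ℝ H) x v)‖ ≤ _
  rw [norm_dCLM_apply]
  exact ContinuousLinearMap.le_opNorm _ v

variable {H} (hH : ContDiff ℝ (⊤ : ℕ∞) H)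
include hH

lemma hasFDerivAt_grad (x : E n) : HasFDerivAt (gradient H) (Hop H x) x := by
  have h1 : Differentiable ℝ (fderiv ℝ H) := (hH.fderiv_right (m := (⊤ : ℕ∞)) (by simp)).differentiable (by simp)
  have h2 : HasFDerivAt (fderiv ℝ H) (fderiv ℝ (fderiv ℝ H) x) x := (h1 x).hasFDerivAt
  exact (dCLM n).hasFDerivAt.comp x h2

lemma Hop_symm (x : E n) (v w : E n) : ⟪Hop H x v, w⟫ = ⟪Hop H x w, v⟫ := by
  rw [inner_Hop, inner_Hop]
  exact hH.contDiffAt.isSymmSndFDerivAt (by simp [minSmoothness_of_isRCLikeNormedField]; exact WithTop.coe_le_coe.mpr (le_top : (2 : ℕ∞) ≤ ⊤)) v w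

lemma hasFDerivAt_Hop (x : E n) :
    HasFDerivAt (fun y => Hop H y)
      ((ContinuousLinearMap.compL ℝ (E n) (StrongDual ℝ (E n)) (E n) (dCLM n)).comp
        (fderiv ℝ (fderiv ℝ (fderiv ℝ H)) x)) x := by
  have h1 : Differentiable ℝ (fderiv ℝ (fderiv ℝ H)) :=
    ((hH.fderiv_right (m := (⊤ : ℕ∞)) (by simp)).fderiv_right (m := (⊤ : ℕ∞)) (by simp)).differentiable (by simp)
  have h2 : HasFDerivAt (fderiv ℝ (fderiv ℝ H)) (fderiv ℝ (fderiv ℝ (fderiv ℝ H)) x) x :=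
    (h1 x).hasFDerivAt
  exact HasFDerivAt.comp (g := ⇑(ContinuousLinearMap.compL ℝ (E n) (StrongDual ℝ (E n)) (E n)
    (dCLM n))) x (ContinuousLinearMap.compL ℝ (E n) (StrongDual ℝ (E n)) (E n)
    (dCLM n)).hasFDerivAt h2

end Aux

namespace Aux
variable {n : ℕ} {H : E n → ℝ}

/-- closed form for the gradient of `afun` -/
def A (H : E n → ℝ) (x : E n) : E n :=
  (1 / 2 : ℝ) • (JL n (gradient H x) - Hop H x (JL n x))

/-- closed form for the gradient of `f2fun` -/
def B (H : E n → ℝ) (x : E n) : E n :=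
  -((1 / 2 : ℝ) • (gradient H x + Hop H x x))

variable (hH : ContDiff ℝ (⊤ : ℕ∞) H)
include hH

lemma hasGradientAt_f2 (x : E n) : HasGradientAt (f2fun H) (B H x) x := by
  have h1 : HasFDerivAt (fun y : E n => (1 / 2 : ℝ) • y)
      ((1 / 2 : ℝ) • ContinuousLinearMap.id ℝ (E n)) x := (hasFDerivAt_id (𝕜 := ℝ) x).const_smul (1 / 2 : ℝ)
  have h2 := (h1.inner ℝ (hasFDerivAt_grad hH x)).neg
  rw [hasGradientAt_iff_hasFDerivAt]
  refine h2.congr_fderiv ?_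
  symm
  ext v
  simp only [InnerProductSpace.toDual_apply_apply, ContinuousLinearMap.neg_apply,
    ContinuousLinearMap.comp_apply, ContinuousLinearMap.prod_apply, fderivInnerCLM_apply,
    ContinuousLinearMap.smul_apply, ContinuousLinearMap.id_apply, B]
  have hs : ⟪Hop H x x, v⟫ = ⟪x, Hop H x v⟫ :=
    (Hop_symm hH x x v).trans (real_inner_comm _ _)
  simp only [inner_neg_left, real_inner_smul_left, inner_add_left, hs,
    real_inner_comm v (gradient H x)]
  ring

lemma hasGradientAt_a (x : E n) : HasGradientAt (afun H) (A H x) x := by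
  have h1 : HasFDerivAt (fun y : E n => (1 / 2 : ℝ) • y)
      ((1 / 2 : ℝ) • ContinuousLinearMap.id ℝ (E n)) x := (hasFDerivAt_id (𝕜 := ℝ) x).const_smul (1 / 2 : ℝ)
  have hJg : HasFDerivAt (fun y => JL n (gradient H y)) ((JL n).comp (Hop H x)) x :=
    (JL n).hasFDerivAt.comp x (hasFDerivAt_grad hH x)
  have h2 := h1.inner ℝ hJg
  rw [hasGradientAt_iff_hasFDerivAt]
  refine h2.congr_fderiv ?_
  symm
  ext v
  simp only [InnerProductSpace.toDual_apply_apply, ContinuousLinearMap.comp_apply,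
    ContinuousLinearMap.prod_apply, fderivInnerCLM_apply,
    ContinuousLinearMap.smul_apply, ContinuousLinearMap.id_apply, A]
  have h3 : ⟪x, JL n (Hop H x v)⟫ = -⟪Hop H x (JL n x), v⟫ := by
    have h4 := inner_JL_left (n := n) x (Hop H x v)
    have h5 : ⟪JL n x, Hop H x v⟫ = ⟪Hop H x (JL n x), v⟫ :=
      (real_inner_comm _ _).trans (Hop_symm hH x v (JL n x))
    linarith [h4, h5]
  simp only [real_inner_smul_left, inner_sub_left, h3, real_inner_comm v (JL n (gradient H x))]
  ring



section Bounds
omit hH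
set_option linter.unusedSectionVars false
variable (M h₁ L : ℝ) (hM : 0 < M) (hh₁ : 0 ≤ h₁) (hL : 0 ≤ L)
variable (hHess : ∀ x, ‖iteratedFDeriv ℝ 2 H x‖ ≤ M)
variable (hGrad : ∀ x, ‖gradient H x‖ ≤ h₁ + M * ‖x‖)
variable (hSat : ∀ x, ‖iteratedFDeriv ℝ 3 H x‖ * ‖x‖ ≤ L)

-- the master constant
local notation "c" => M + h₁ + L + 1

include hM hh₁ hL

include hHess in
lemma bHop (x : E n) : ‖Hop H x‖ ≤ M := (norm_Hop_le H x).trans (hHess x)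

include hHess in
lemma bHop_apply (x v : E n) : ‖Hop H x v‖ ≤ M * ‖v‖ :=
  (ContinuousLinearMap.le_opNorm _ v).trans
    (mul_le_mul_of_nonneg_right (bHop M h₁ L hM hh₁ hL hHess x) (norm_nonneg v))

include hGrad in
lemma bGrad (x : E n) : ‖gradient H x‖ ≤ c * (‖x‖ + 1) := by
  have := hGrad x
  have h0 := norm_nonneg x
  nlinarith

include hHess hGrad in
lemma bA (x : E n) : ‖A H x‖ ≤ c * (‖x‖ + 1) := by
  have h1 : ‖A H x‖ ≤ (1/2 : ℝ) * (‖gradient H x‖ + M * ‖x‖) := by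
    rw [A, norm_smul]
    have h2 : ‖JL n (gradient H x) - Hop H x (JL n x)‖ ≤ ‖gradient H x‖ + M * ‖x‖ := by
      refine (norm_sub_le _ _).trans ?_
      rw [norm_JL]
      have := (bHop_apply M h₁ L hM hh₁ hL hHess x (JL n x))
      rw [norm_JL] at this
      linarith
    rw [Real.norm_eq_abs, abs_of_pos (by norm_num : (0:ℝ) < 1/2)]
    linarith
  have := hGrad x
  have h0 := norm_nonneg x
  nlinarith

include hHess hGrad in
lemma bB (x : E n) : ‖B H x‖ ≤ c * (‖x‖ + 1) := by
  have h1 : ‖B H x‖ ≤ (1/2 : ℝ) * (‖gradient H x‖ + M * ‖x‖) := by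
    rw [B, norm_neg, norm_smul]
    have h2 : ‖gradient H x + Hop H x x‖ ≤ ‖gradient H x‖ + M * ‖x‖ := by
      refine (norm_add_le _ _).trans ?_
      have := bHop_apply M h₁ L hM hh₁ hL hHess x x
      linarith
    rw [Real.norm_eq_abs, abs_of_pos (by norm_num : (0:ℝ) < 1/2)]
    linarith
  have := hGrad x
  have h0 := norm_nonneg x
  nlinarith



-- derivative CLMs
end Bounds

section NoH
omit hH

/-- third-derivative operator -/
def W (H : E n → ℝ) (x : E n) : E n →L[ℝ] (E n →L[ℝ] E n) :=
  (ContinuousLinearMap.compL ℝ (E n) (StrongDual ℝ (E n)) (E n) (dCLM n)).comp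
    (fderiv ℝ (fderiv ℝ (fderiv ℝ H)) x)

@[simp] lemma W_apply (H : E n → ℝ) (x v u : E n) :
    W H x v u = dCLM n (fderiv ℝ (fderiv ℝ (fderiv ℝ H)) x v u) := rfl

/-- derivative of A -/
def A' (H : E n → ℝ) (x : E n) : E n →L[ℝ] E n :=
  (1/2 : ℝ) • ((JL n).comp (Hop H x) - ((Hop H x).comp (JL n) + (W H x).flip (JL n x)))

/-- derivative of B -/
def B' (H : E n → ℝ) (x : E n) : E n →L[ℝ] E n :=
  -((1/2 : ℝ) • (Hop H x + ((Hop H x).comp (ContinuousLinearMap.id ℝ (E n)) + (W H x).flip x)))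

lemma A'_apply (H : E n → ℝ) (x v : E n) :
    A' H x v = (1/2 : ℝ) • (JL n (Hop H x v) - (Hop H x (JL n v) + W H x v (JL n x))) := rfl

lemma B'_apply (H : E n → ℝ) (x v : E n) :
    B' H x v = -((1/2 : ℝ) • (Hop H x v + (Hop H x v + W H x v x))) := rfl

end NoH

include hH in
lemma hasFDerivAt_A (x : E n) : HasFDerivAt (A H) (A' H x) x := by
  have hJg : HasFDerivAt (fun y => JL n (gradient H y)) ((JL n).comp (Hop H x)) x :=
    (JL n).hasFDerivAt.comp x (hasFDerivAt_grad hH x)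
  have hHopJ : HasFDerivAt (fun y => Hop H y (JL n y))
      ((Hop H x).comp (JL n) + (W H x).flip (JL n x)) x :=
    (hasFDerivAt_Hop hH x).clm_apply (JL n).hasFDerivAt
  exact (hJg.sub hHopJ).const_smul (1/2 : ℝ)

include hH in
lemma hasFDerivAt_B (x : E n) : HasFDerivAt (B H) (B' H x) x := by
  have hHopx : HasFDerivAt (fun y => Hop H y y)
      ((Hop H x).comp (ContinuousLinearMap.id ℝ (E n)) + (W H x).flip x) x :=
    (hasFDerivAt_Hop hH x).clm_apply (hasFDerivAt_id x)
  exact (((hasFDerivAt_grad hH x).add hHopx).const_smul (1/2 : ℝ)).neg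

section Bounds2
omit hH
set_option linter.unusedSectionVars false
variable (M h₁ L : ℝ) (hM : 0 < M) (hh₁ : 0 ≤ h₁) (hL : 0 ≤ L)
variable (hHess : ∀ x, ‖iteratedFDeriv ℝ 2 H x‖ ≤ M)
variable (hGrad : ∀ x, ‖gradient H x‖ ≤ h₁ + M * ‖x‖)
variable (hSat : ∀ x, ‖iteratedFDeriv ℝ 3 H x‖ * ‖x‖ ≤ L)
local notation "c" => M + h₁ + L + 1

lemma bW (x v u : E n) : ‖W H x v u‖ ≤ ‖iteratedFDeriv ℝ 3 H x‖ * ‖v‖ * ‖u‖ := by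
  rw [W_apply, norm_dCLM_apply]
  exact norm_fd3 H x v u

include hSat in
lemma bWx (x v : E n) : ‖W H x v x‖ ≤ L * ‖v‖ := by
  refine (bW x v x).trans ?_
  have := hSat x
  have := norm_nonneg v
  have := norm_nonneg x
  have := norm_nonneg (iteratedFDeriv ℝ 3 H x)
  nlinarith

include hSat in
lemma bWJx (x v : E n) : ‖W H x v (JL n x)‖ ≤ L * ‖v‖ := by
  refine (bW x v (JL n x)).trans ?_
  rw [norm_JL]
  have := hSat x
  have := norm_nonneg v
  have := norm_nonneg x
  have := norm_nonneg (iteratedFDeriv ℝ 3 H x)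
  nlinarith

include hM hh₁ hL hHess hSat in
lemma bA'v (x v : E n) : ‖A' H x v‖ ≤ 2 * c * ‖v‖ := by
  rw [A'_apply, norm_smul, Real.norm_eq_abs, abs_of_pos (by norm_num : (0:ℝ) < 1/2)]
  have h1 : ‖JL n (Hop H x v)‖ ≤ M * ‖v‖ := by
    rw [norm_JL]; exact bHop_apply M h₁ L hM hh₁ hL hHess x v
  have h2 : ‖Hop H x (JL n v)‖ ≤ M * ‖v‖ := by
    have := bHop_apply M h₁ L hM hh₁ hL hHess x (JL n v)
    rwa [norm_JL] at this
  have h3 := bWJx L hSat x v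
  have h4 : ‖JL n (Hop H x v) - (Hop H x (JL n v) + W H x v (JL n x))‖
      ≤ M * ‖v‖ + (M * ‖v‖ + L * ‖v‖) :=
    (norm_sub_le _ _).trans (by
      have := norm_add_le (Hop H x (JL n v)) (W H x v (JL n x))
      linarith)
  have h0 := norm_nonneg v
  nlinarith

include hM hh₁ hL hHess hSat in
lemma bB'v (x v : E n) : ‖B' H x v‖ ≤ 2 * c * ‖v‖ := by
  rw [B'_apply, norm_neg, norm_smul, Real.norm_eq_abs, abs_of_pos (by norm_num : (0:ℝ) < 1/2)]
  have h1 : ‖Hop H x v‖ ≤ M * ‖v‖ := bHop_apply M h₁ L hM hh₁ hL hHess x v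
  have h3 := bWx L hSat x v
  have h4 : ‖Hop H x v + (Hop H x v + W H x v x)‖ ≤ M * ‖v‖ + (M * ‖v‖ + L * ‖v‖) :=
    (norm_add_le _ _).trans (by
      have := norm_add_le (Hop H x v) (W H x v x)
      linarith)
  have h0 := norm_nonneg v
  nlinarith

end Bounds2




section Final
set_option linter.unusedSectionVars false
variable (M h₁ L : ℝ) (hM : 0 < M) (hh₁ : 0 ≤ h₁) (hL : 0 ≤ L)
variable (hHess : ∀ x, ‖iteratedFDeriv ℝ 2 H x‖ ≤ M)
variable (hGrad : ∀ x, ‖gradient H x‖ ≤ h₁ + M * ‖x‖)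
variable (hSat : ∀ x, ‖iteratedFDeriv ℝ 3 H x‖ * ‖x‖ ≤ L)
local notation "c" => M + h₁ + L + 1
include hH hM hh₁ hL hHess hGrad hSat

lemma f2val (x : E n) : |f2fun H x| ≤ c * (‖x‖ + 1) ^ 2 := by
  have h := abs_real_inner_le_norm ((1 / 2 : ℝ) • x) (gradient H x)
  rw [norm_smul, Real.norm_eq_abs, abs_of_pos (by norm_num : (0:ℝ) < 1/2)] at h
  have h1 := hGrad x
  have h0 := norm_nonneg x
  have h2 : |f2fun H x| = |@inner ℝ _ _ ((1 / 2 : ℝ) • x) (gradient H x)| := by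
    rw [f2fun, abs_neg]
  rw [h2]
  nlinarith [norm_nonneg (gradient H x), mul_le_mul_of_nonneg_left h1 h0, sq_nonneg ‖x‖]

lemma gradf2 (x : E n) : ‖gradient (f2fun H) x‖ ≤ c * (‖x‖ + 1) := by
  rw [(hasGradientAt_f2 hH x).gradient]
  exact bB M h₁ L hM hh₁ hL hHess hGrad x

lemma f1val (x : E n) : |f1fun H x| ≤ 4 * c ^ 2 * (‖x‖ + 1) ^ 2 := by
  have hPA := bA M h₁ L hM hh₁ hL hHess hGrad x
  have hPB := bB M h₁ L hM hh₁ hL hHess hGrad x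
  have hPg := bGrad M h₁ L hM hh₁ hL hGrad x
  have hf1 : f1fun H x = @inner ℝ _ _ (A H x) (JL n (gradient H x))
      - ‖gradient H x‖ ^ 2 - ‖B H x‖ ^ 2 - ‖A H x‖ ^ 2 := by
    rw [f1fun, (hasGradientAt_a hH x).gradient, (hasGradientAt_f2 hH x).gradient]; rfl
  rw [hf1]
  have ht := abs_real_inner_le_norm (A H x) (JL n (gradient H x))
  rw [norm_JL] at ht
  have h0 := norm_nonneg x
  have hA0 := norm_nonneg (A H x)
  have hB0 := norm_nonneg (B H x)
  have hg0 := norm_nonneg (gradient H x)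
  have hP0 : (0:ℝ) ≤ c * (‖x‖ + 1) := by nlinarith
  have s1 : ‖gradient H x‖ ^ 2 ≤ (c * (‖x‖ + 1)) ^ 2 := by nlinarith
  have s2 : ‖B H x‖ ^ 2 ≤ (c * (‖x‖ + 1)) ^ 2 := by nlinarith
  have s3 : ‖A H x‖ ^ 2 ≤ (c * (‖x‖ + 1)) ^ 2 := by nlinarith
  have s4 : ‖A H x‖ * ‖gradient H x‖ ≤ (c * (‖x‖ + 1)) ^ 2 := by
    have := mul_le_mul hPA hPg hg0 hP0
    nlinarith
  have habs := abs_le.mp ht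
  rw [show (4:ℝ) * c ^ 2 * (‖x‖ + 1) ^ 2 = 4 * ((c * (‖x‖ + 1)) ^ 2) by ring, abs_le]
  constructor <;>
    linarith [sq_nonneg ‖gradient H x‖, sq_nonneg ‖B H x‖, sq_nonneg ‖A H x‖, habs.1, habs.2]

lemma gradf1 (x : E n) : ‖gradient (f1fun H) x‖ ≤ 13 * c ^ 2 * (‖x‖ + 1) := by
  have hgx : HasFDerivAt (gradient H) (Hop H x) x := hasFDerivAt_grad hH x
  have hJg : HasFDerivAt (fun y => JL n (gradient H y)) ((JL n).comp (Hop H x)) x :=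
    (JL n).hasFDerivAt.comp x hgx
  have hA := hasFDerivAt_A hH x
  have hB := hasFDerivAt_B hH x
  have heq : f1fun H = fun y => @inner ℝ _ _ (A H y) (JL n (gradient H y))
      - @inner ℝ _ _ (gradient H y) (gradient H y)
      - @inner ℝ _ _ (B H y) (B H y) - @inner ℝ _ _ (A H y) (A H y) := by
    funext y
    rw [f1fun, (hasGradientAt_a hH y).gradient, (hasGradientAt_f2 hH y).gradient,
      real_inner_self_eq_norm_sq, real_inner_self_eq_norm_sq, real_inner_self_eq_norm_sq]
    rfl
  have hf1 : HasFDerivAt (f1fun H)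
      ((((fderivInnerCLM ℝ (A H x, JL n (gradient H x))).comp
          ((A' H x).prod ((JL n).comp (Hop H x)))
        - (fderivInnerCLM ℝ (gradient H x, gradient H x)).comp ((Hop H x).prod (Hop H x)))
        - (fderivInnerCLM ℝ (B H x, B H x)).comp ((B' H x).prod (B' H x)))
        - (fderivInnerCLM ℝ (A H x, A H x)).comp ((A' H x).prod (A' H x))) x := by
    rw [heq]
    exact (((hA.inner ℝ hJg).sub (hgx.inner ℝ hgx)).sub (hB.inner ℝ hB)).sub (hA.inner ℝ hA)
  have hkey : ‖gradient (f1fun H) x‖ = ‖fderiv ℝ (f1fun H) x‖ := by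
    rw [gradient]; exact LinearIsometryEquiv.norm_map _ _
  rw [hkey, hf1.fderiv]
  have hc : (0:ℝ) ≤ c := by linarith
  have hPA := bA M h₁ L hM hh₁ hL hHess hGrad x
  have hPB := bB M h₁ L hM hh₁ hL hHess hGrad x
  have hPg := bGrad M h₁ L hM hh₁ hL hGrad x
  have hP0 : (0:ℝ) ≤ c * (‖x‖ + 1) := by positivity
  refine ContinuousLinearMap.opNorm_le_bound _ (by positivity) fun v => ?_
  have hv0 := norm_nonneg v
  have hHv : ‖Hop H x v‖ ≤ c * ‖v‖ :=
    (bHop_apply M h₁ L hM hh₁ hL hHess x v).trans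
      (mul_le_mul_of_nonneg_right (by linarith) hv0)
  have hA'v : ‖A' H x v‖ ≤ 2 * c * ‖v‖ := bA'v M h₁ L hM hh₁ hL hHess hSat x v
  have hB'v : ‖B' H x v‖ ≤ 2 * c * ‖v‖ := bB'v M h₁ L hM hh₁ hL hHess hSat x v
  simp only [ContinuousLinearMap.sub_apply, ContinuousLinearMap.comp_apply,
    ContinuousLinearMap.prod_apply, fderivInnerCLM_apply]
  have ht1 : |@inner ℝ _ _ (A H x) (JL n (Hop H x v))| ≤ c^2 * (‖x‖+1) * ‖v‖ := by
    have h := abs_real_inner_le_norm (A H x) (JL n (Hop H x v))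
    rw [norm_JL] at h
    calc |@inner ℝ _ _ (A H x) (JL n (Hop H x v))| ≤ ‖A H x‖ * ‖Hop H x v‖ := h
      _ ≤ (c * (‖x‖ + 1)) * (c * ‖v‖) := mul_le_mul hPA hHv (norm_nonneg _) hP0
      _ = c^2 * (‖x‖+1) * ‖v‖ := by ring
  have ht2 : |@inner ℝ _ _ (A' H x v) (JL n (gradient H x))| ≤ 2 * c^2 * (‖x‖+1) * ‖v‖ := by
    have h := abs_real_inner_le_norm (A' H x v) (JL n (gradient H x))
    rw [norm_JL] at h
    calc |@inner ℝ _ _ (A' H x v) (JL n (gradient H x))| ≤ ‖A' H x v‖ * ‖gradient H x‖ := h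
      _ ≤ (2 * c * ‖v‖) * (c * (‖x‖ + 1)) :=
          mul_le_mul hA'v hPg (norm_nonneg _) (by positivity)
      _ = 2 * c^2 * (‖x‖+1) * ‖v‖ := by ring
  have ht3 : |@inner ℝ _ _ (gradient H x) (Hop H x v)| ≤ c^2 * (‖x‖+1) * ‖v‖ := by
    calc |@inner ℝ _ _ (gradient H x) (Hop H x v)| ≤ ‖gradient H x‖ * ‖Hop H x v‖ :=
          abs_real_inner_le_norm _ _
      _ ≤ (c * (‖x‖ + 1)) * (c * ‖v‖) := mul_le_mul hPg hHv (norm_nonneg _) hP0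
      _ = c^2 * (‖x‖+1) * ‖v‖ := by ring
  have ht4 : |@inner ℝ _ _ (Hop H x v) (gradient H x)| ≤ c^2 * (‖x‖+1) * ‖v‖ := by
    rw [real_inner_comm]; exact ht3
  have ht5 : |@inner ℝ _ _ (B H x) (B' H x v)| ≤ 2 * c^2 * (‖x‖+1) * ‖v‖ := by
    calc |@inner ℝ _ _ (B H x) (B' H x v)| ≤ ‖B H x‖ * ‖B' H x v‖ :=
          abs_real_inner_le_norm _ _
      _ ≤ (c * (‖x‖ + 1)) * (2 * c * ‖v‖) := mul_le_mul hPB hB'v (norm_nonneg _) hP0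
      _ = 2 * c^2 * (‖x‖+1) * ‖v‖ := by ring
  have ht6 : |@inner ℝ _ _ (B' H x v) (B H x)| ≤ 2 * c^2 * (‖x‖+1) * ‖v‖ := by
    rw [real_inner_comm]; exact ht5
  have ht7 : |@inner ℝ _ _ (A H x) (A' H x v)| ≤ 2 * c^2 * (‖x‖+1) * ‖v‖ := by
    calc |@inner ℝ _ _ (A H x) (A' H x v)| ≤ ‖A H x‖ * ‖A' H x v‖ :=
          abs_real_inner_le_norm _ _
      _ ≤ (c * (‖x‖ + 1)) * (2 * c * ‖v‖) := mul_le_mul hPA hA'v (norm_nonneg _) hP0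
      _ = 2 * c^2 * (‖x‖+1) * ‖v‖ := by ring
  have ht8 : |@inner ℝ _ _ (A' H x v) (A H x)| ≤ 2 * c^2 * (‖x‖+1) * ‖v‖ := by
    rw [real_inner_comm]; exact ht7
  rw [Real.norm_eq_abs, abs_le]
  have e1 := abs_le.mp ht1
  have e2 := abs_le.mp ht2
  have e3 := abs_le.mp ht3
  have e4 := abs_le.mp ht4
  have e5 := abs_le.mp ht5
  have e6 := abs_le.mp ht6
  have e7 := abs_le.mp ht7
  have e8 := abs_le.mp ht8
  constructor <;> linarith

end Final
end Aux

/-- **Lemma B.1 (growth bounds for the auxiliary functions in the maximum principle).** -/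
theorem auxiliary_function_growth_bounds (n : ℕ) (M h₁ L : ℝ)
    (hM : 0 < M) (hh₁ : 0 ≤ h₁) (hL : 0 ≤ L) :
    ∃ α₁ α₂ α₃ α₄ : ℝ, 0 < α₁ ∧ 0 < α₂ ∧ 0 < α₃ ∧ 0 < α₄ ∧
      ∀ H : E n → ℝ, ContDiff ℝ (⊤ : ℕ∞) H →
        HessBound H M → GradBound H M h₁ → SatH2 H L →
        ∀ x : E n,
          |f1fun H x| ≤ α₁ * (‖x‖ + 1) ^ 2 ∧
          |f2fun H x| ≤ α₂ * (‖x‖ + 1) ^ 2 ∧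
          ‖gradient (f1fun H) x‖ ≤ α₃ * (‖x‖ + 1) ∧
          ‖gradient (f2fun H) x‖ ≤ α₄ * (‖x‖ + 1) := by
  refine ⟨4 * (M + h₁ + L + 1) ^ 2, M + h₁ + L + 1, 13 * (M + h₁ + L + 1) ^ 2,
    M + h₁ + L + 1, by nlinarith, by linarith, by nlinarith, by linarith, ?_⟩
  intro H hHc hhess hgrad hsat x
  exact ⟨Aux.f1val hHc M h₁ L hM hh₁ hL hhess hgrad hsat x,
    Aux.f2val hHc M h₁ L hM hh₁ hL hhess hgrad hsat x,
    Aux.gradf1 hHc M h₁ L hM hh₁ hL hhess hgrad hsat x,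
    Aux.gradf2 hHc M h₁ L hM hh₁ hL hhess hgrad hsat x⟩
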